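/- arXiv:1102.2586 — 5 statements merged into one kernel-verified Lean document; each statement's English description precedes it below -/
import Mathlib

section
/- Let X be a locally compact topological space containing a dense open subset O that is Hausdorff (in the subspace topology). Suppose every nonempty open subset of X contains a closed subset of X with nonempty interior. Then X is quasi-completely regular: for every nonempty open set U ⊆ X there is a continuous real-valued function on X that is not identically zero and vanishes identically on X \ U. -/
/-- A topological space is quasi-completely regular if for every nonempty open set `U`
there is a continuous real-valued function, not identically zero, vanishing off `U`. -/
def QuasiCompletelyRegular (X : Type*) [TopologicalSpace X] : Prop :=
  ∀ U : Set X, IsOpen U → U.Nonempty →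
    ∃ f : C(X, ℝ), f ≠ 0 ∧ ∀ x ∈ Uᶜ, f x = 0

/-!
Inside a nonempty open `U`, the hypothesis gives a closed set `F ⊆ U ∩ O` with nonempty interior
(`U ∩ O ≠ ∅` by density). The open set `O` is locally compact Hausdorff, so Urysohn's lemma yields
a nonzero continuous function on `O` vanishing off `interior F`. Extended by zero it is continuous
on all of `X`: near points of `O` it agrees with the original function, and off the closed set `F`
it vanishes identically.
-/

open Function Set

section

variable {X : Type*} [TopologicalSpace X]

theorem continuous_extend_zero_of_support_subset {M : Type*} [TopologicalSpace M] [Zero M]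
    {O F : Set X} (hO : IsOpen O) (hF : IsClosed F) (hFO : F ⊆ O) {f : O → M}
    (hf : Continuous f) (hsupp : support f ⊆ Subtype.val ⁻¹' F) :
    Continuous (Subtype.val.extend f 0) := by
  have htsupp : tsupport (Subtype.val.extend f 0) ⊆ F :=
    closure_minimal (support_extend_zero_subset.trans (image_subset_iff.2 hsupp)) hF
  refine continuous_of_tsupport fun x hx => ?_
  lift x to O using hFO (htsupp hx)
  rw [← hO.isOpenEmbedding_subtypeVal.continuousAt_iff, extend_comp Subtype.val_injective]
  exact hf.continuousAt

theorem quasiCompletelyRegular_of_locallyCompactSpace [RegularSpace X] [LocallyCompactSpace X] :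
    QuasiCompletelyRegular X := by
  rintro U hU ⟨x, hxU⟩
  obtain ⟨f, hf_one, hf_zero, -, -⟩ := exists_continuous_one_zero_of_isCompact
    isCompact_singleton hU.isClosed_compl (disjoint_singleton_left.2 (not_not.2 hxU))
  refine ⟨f, fun hf => ?_, fun y hy => hf_zero hy⟩
  simpa [hf] using hf_one (mem_singleton x)

theorem QuasiCompletelyRegular.of_isOpen_dense {O : Set X} (hO : IsOpen O) (hOdense : Dense O)
    (hOqcr : QuasiCompletelyRegular O)
    (h : ∀ U : Set X, IsOpen U → U.Nonempty →
      ∃ F : Set X, F ⊆ U ∧ IsClosed F ∧ (interior F).Nonempty) :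
    QuasiCompletelyRegular X := by
  intro U hU hUne
  obtain ⟨F, hFUO, hF, x, hx⟩ := h (U ∩ O) (hU.inter hO) (hOdense.inter_open_nonempty U hU hUne)
  have hFO : F ⊆ O := hFUO.trans inter_subset_right
  obtain ⟨f, hf_ne, hf_zero⟩ := hOqcr (Subtype.val ⁻¹' interior F)
    (isOpen_interior.preimage continuous_subtype_val) ⟨⟨x, hFO (interior_subset hx)⟩, hx⟩
  have hsupp : support f ⊆ Subtype.val ⁻¹' F := fun y hy =>
    interior_subset (s := F) (not_not.1 fun hyF => hy (hf_zero y hyF))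
  let g : C(X, ℝ) := ⟨_, continuous_extend_zero_of_support_subset hO hF hFO f.continuous hsupp⟩
  have hg : ∀ y : O, g y = f y := Subtype.val_injective.extend_apply f 0
  have hgF : support g ⊆ F := support_extend_zero_subset.trans (image_subset_iff.2 hsupp)
  refine ⟨g, fun hg0 => hf_ne (ContinuousMap.ext fun y => by simp [← hg, hg0]), fun y hyU => ?_⟩
  exact notMem_support.1 fun hy => hyU (hFUO (hgF hy)).1

end

theorem stmt0 {X : Type*} [TopologicalSpace X] [LocallyCompactSpace X]
    (O : Set X) (hO : IsOpen O) (hOdense : Dense O) (hOT2 : T2Space O)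
    (h : ∀ U : Set X, IsOpen U → U.Nonempty →
      ∃ F : Set X, F ⊆ U ∧ IsClosed F ∧ (interior F).Nonempty) :
    QuasiCompletelyRegular X :=
  have : LocallyCompactSpace O := hO.locallyCompactSpace
  .of_isOpen_dense hO hOdense quasiCompletelyRegular_of_locallyCompactSpace h
end

section
/- In a ring A, every primal ideal contains a minimal primal ideal: the set of primal ideals contained in a given primal ideal I, ordered by inclusion, has a minimal element. -/
/-- A two-sided ideal `I` of a ring `A` is primal if whenever ideals `I₁, …, Iₙ` (`n ≥ 2`)
have product `{0}` (equivalently, every product of elements `x₁ ⋯ xₙ` with `xᵢ ∈ Iᵢ`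
vanishes), then `Iₖ ⊆ I` for some `k`. -/
def IsPrimalIdeal {A : Type*} [NonUnitalRing A] (I : TwoSidedIdeal A) : Prop :=
  ∀ L : List (TwoSidedIdeal A), 2 ≤ L.length →
    (∀ (x : A) (xs : List A), List.Forall₂ (fun y J => y ∈ J) (x :: xs) L →
      xs.foldl (· * ·) x = 0) →
    ∃ J ∈ L, J ≤ I

/-! Primal ideals are closed under infima of downward directed families, since the primality
condition only involves finitely many ideals at a time; Zorn's lemma then produces a minimal
primal ideal below any given one. -/

theorem DirectedOn.exists_mem_forall_not_le_of_not_le_sInf {α : Type*} [CompleteLattice α]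
    {s : Set α} (hs : DirectedOn (· ≥ ·) s) (hne : s.Nonempty) :
    ∀ L : List α, (∀ a ∈ L, ¬ a ≤ sInf s) → ∃ c ∈ s, ∀ a ∈ L, ¬ a ≤ c
  | [], _ => hne.imp fun _ hc => ⟨hc, by simp⟩
  | a :: L, hL => by
    obtain ⟨c, hcs, hc⟩ :=
      hs.exists_mem_forall_not_le_of_not_le_sInf hne L fun b hb => hL b (.tail a hb)
    obtain ⟨d, hds, had⟩ : ∃ d ∈ s, ¬ a ≤ d := by
      simpa [le_sInf_iff] using hL a (.head L)
    obtain ⟨e, hes, hec, hed⟩ := hs c hcs d hds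
    refine ⟨e, hes, fun b hb => ?_⟩
    rcases List.mem_cons.1 hb with rfl | hb
    · exact fun hbe => had (hbe.trans hed)
    · exact fun hbe => hc b hb (hbe.trans hec)

theorem IsPrimalIdeal.sInf {A : Type*} [NonUnitalRing A] {s : Set (TwoSidedIdeal A)}
    (hs : DirectedOn (· ≥ ·) s) (hne : s.Nonempty) (hp : ∀ J ∈ s, IsPrimalIdeal J) :
    IsPrimalIdeal (sInf s) := by
  intro L hlen hprod
  by_contra! hL
  obtain ⟨C, hCs, hC⟩ := hs.exists_mem_forall_not_le_of_not_le_sInf hne L hL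
  obtain ⟨J, hJL, hJC⟩ := hp C hCs L hlen hprod
  exact hC J hJL hJC

theorem zorn_ge_nonempty₀ {α : Type*} [Preorder α] (s : Set α)
    (ih : ∀ c ⊆ s, IsChain (· ≤ ·) c → ∀ y ∈ c, ∃ lb ∈ s, ∀ z ∈ c, lb ≤ z) (x : α) (hxs : x ∈ s) :
    ∃ m, m ≤ x ∧ Minimal (· ∈ s) m :=
  @zorn_le_nonempty₀ αᵒᵈ _ s (fun c hcs hc y hy => ih c hcs hc.symm y hy) x hxs

/-- Every primal ideal contains a minimal primal ideal: the set of primal ideals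
contained in a given primal ideal `I`, ordered by inclusion, has a minimal element. -/
theorem stmt6 {A : Type*} [NonUnitalRing A] (I : TwoSidedIdeal A)
    (hI : IsPrimalIdeal I) :
    ∃ M : TwoSidedIdeal A, IsPrimalIdeal M ∧ M ≤ I ∧
      ∀ J : TwoSidedIdeal A, IsPrimalIdeal J → J ≤ M → J = M := by
  obtain ⟨M, hMI, ⟨hM, -⟩, hMmin⟩ := zorn_ge_nonempty₀ {J | IsPrimalIdeal J ∧ J ≤ I}
    (fun c hcS hc J hJ => ⟨sInf c,
      ⟨.sInf (show IsChain (· ≥ ·) c from hc.symm).directedOn ⟨J, hJ⟩ fun K hK => (hcS hK).1,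
        (sInf_le hJ).trans (hcS hJ).2⟩,
      fun K hK => sInf_le hK⟩)
    I ⟨hI, le_rfl⟩
  exact ⟨M, hM, hMI, fun J hJ hJM => le_antisymm hJM (hMmin ⟨hJ, hJM.trans hMI⟩ hJM)⟩
end

section
/- The intersection of a nonempty chain (totally ordered family under inclusion) of primal ideals of a ring A is a primal ideal. -/
theorem IsChain.exists_forall_not_le_of_finite {α : Type*} [Preorder α] {C : Set α}
    (hC : IsChain (· ≤ ·) C) (hne : C.Nonempty) {s : Set α} (hs : s.Finite)
    (h : ∀ J ∈ s, ∃ I ∈ C, ¬ J ≤ I) : ∃ I ∈ C, ∀ J ∈ s, ¬ J ≤ I := by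
  induction s, hs using Set.Finite.induction_on with
  | empty => exact ⟨hne.some, hne.some_mem, by simp⟩
  | @insert a s _ _ ih =>
    obtain ⟨I₁, hI₁, ha⟩ := h a (Set.mem_insert a s)
    obtain ⟨I₂, hI₂, hs⟩ := ih fun J hJ => h J (Set.mem_insert_of_mem a hJ)
    rcases hC.total hI₁ hI₂ with h₁₂ | h₂₁
    · exact ⟨I₁, hI₁, Set.forall_mem_insert.2 ⟨ha, fun J hJ hJI => hs J hJ (hJI.trans h₁₂)⟩⟩
    · exact ⟨I₂, hI₂, Set.forall_mem_insert.2 ⟨fun haI => ha (haI.trans h₂₁), hs⟩⟩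

/-- The intersection of a nonempty chain of primal ideals of a ring is a primal ideal. -/
theorem stmt7 {A : Type*} [NonUnitalRing A] (C : Set (TwoSidedIdeal A))
    (hne : C.Nonempty) (hchain : IsChain (· ≤ ·) C)
    (hprimal : ∀ I ∈ C, IsPrimalIdeal I) :
    IsPrimalIdeal (sInf C) := by
  intro L hlen hprod
  by_contra! hL
  have hL_avoid : ∀ J ∈ L, ∃ I ∈ C, ¬ J ≤ I := fun J hJ => by
    simpa [le_sInf_iff] using hL J hJ
  obtain ⟨I, hIC, hI⟩ := hchain.exists_forall_not_le_of_finite hne L.finite_toSet hL_avoid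
  obtain ⟨J, hJL, hJI⟩ := hprimal I hIC L hlen hprod
  exact hI J hJL hJI
end

section
/- Let A be a C*-algebra and let S be a set of closed two-sided ideals of A such that each quotient A/I is unital. Equip S with the topology where a net I_α → I iff ‖θ_{I_α}(a)‖ → ‖θ_I(a)‖ for all a ∈ A. Then for each λ ∈ ℂ and a ∈ A, the function I ↦ ‖λ·1_I + θ_I(a)‖ on S is lower semicontinuous. -/
/-!
Fix `s` and a contractive lift `d ∈ A` of `1 ∈ B s`. For every `s'`,
`π s' (λ d + a d) = (λ 1 + π s' a) * π s' d`, so the continuous function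
`s' ↦ ‖π s' (λ d + a d)‖` lies below `s' ↦ ‖λ 1 + π s' a‖` and touches it at `s`.
A function with a continuous minorant touching it at every point is lower semicontinuous.
-/

open scoped ComplexStarModule CStarAlgebra

theorem lowerSemicontinuous_of_forall_continuous_minorant {S α : Type*} [TopologicalSpace S]
    [LinearOrder α] [TopologicalSpace α] [OrderClosedTopology α]
    {f : S → α} (h : ∀ s, ∃ g : S → α, Continuous g ∧ g ≤ f ∧ g s = f s) :
    LowerSemicontinuous f := by
  intro s y hy
  obtain ⟨g, hg, hgf, hgs⟩ := h s
  have : ∀ᶠ s' in nhds s, y < g s' :=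
    continuousAt_const.eventually_lt hg.continuousAt (show y < g s by rwa [hgs])
  exact this.mono fun s' hs' => hs'.trans_le (hgf s')

/-- A surjection onto a unital C⋆-algebra lifts `1` to a contraction: clamp the spectrum of a
self-adjoint lift to `[-1, 1]`, which does not change its image `1`. -/
theorem NonUnitalStarAlgHom.exists_norm_le_one_map_eq_one {A B : Type*}
    [NonUnitalCStarAlgebra A] [CStarAlgebra B] (π : A →⋆ₙₐ[ℂ] B)
    (hπ : Function.Surjective π) : ∃ d : A, ‖d‖ ≤ 1 ∧ π d = 1 := by
  obtain ⟨c, hc⟩ := hπ 1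
  set clamp : ℝ → ℝ := fun t => max (-1) (min 1 t)
  have hclamp : Continuous clamp := by fun_prop
  have hπℜ : π (ℜ c : A) = algebraMap ℝ B 1 := by
    rw [map_realPart, hc, realPart_one, selfAdjoint.val_one, map_one]
  refine ⟨cfcₙ clamp (ℜ c : A), norm_cfcₙ_le fun t _ => ?_, ?_⟩
  · simp only [clamp, Real.norm_eq_abs, abs_le]
    exact ⟨le_max_left _ _, max_le (by norm_num) (min_le_left _ _)⟩
  · rw [NonUnitalStarAlgHom.map_cfcₙ π clamp _ hclamp.continuousOn (by norm_num [clamp]),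
      hπℜ, cfcₙ_eq_cfc hclamp.continuousOn (by norm_num [clamp]), cfc_algebraMap]
    norm_num [clamp]

theorem NonUnitalStarAlgHom.map_smul_add_mul {A B : Type*} [NonUnitalRing A] [Module ℂ A]
    [Star A] [Ring B] [Algebra ℂ B] [Star B] (π : A →⋆ₙₐ[ℂ] B) (lam : ℂ) (a d : A) :
    π (lam • d + a * d) = (lam • (1 : B) + π a) * π d := by
  rw [map_add, map_smul, map_mul, add_mul, smul_one_mul]

/-- Let `A` be a C*-algebra and `S` a set of closed two-sided ideals with unital quotients,
realized by surjective star homomorphisms `π s : A → B s` onto unital C*-algebras.  `S`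
carries a topology in which the functions `s ↦ ‖π s a‖` are continuous (nets converge iff
the quotient norms converge).  Then for each `λ ∈ ℂ` and `a ∈ A` the function
`s ↦ ‖λ·1 + π s a‖` is lower semicontinuous on `S`. -/
theorem stmt9 {A : Type*} [NonUnitalCStarAlgebra A]
    {S : Type*} [TopologicalSpace S]
    (B : S → Type*) [∀ s, CStarAlgebra (B s)]
    (π : ∀ s, A →⋆ₙₐ[ℂ] B s) (hsurj : ∀ s, Function.Surjective (π s))
    (htop : ∀ a : A, Continuous fun s => ‖π s a‖)
    (lam : ℂ) (a : A) :
    LowerSemicontinuous fun s => ‖lam • (1 : B s) + π s a‖ := by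
  refine lowerSemicontinuous_of_forall_continuous_minorant fun s => ?_
  obtain ⟨d, hd, hπd⟩ := (π s).exists_norm_le_one_map_eq_one (hsurj s)
  refine ⟨fun s' => ‖π s' (lam • d + a * d)‖, htop _, fun s' => ?_, ?_⟩
  · calc ‖π s' (lam • d + a * d)‖
        = ‖(lam • (1 : B s') + π s' a) * π s' d‖ := by rw [(π s').map_smul_add_mul]
      _ ≤ ‖lam • (1 : B s') + π s' a‖ * ‖π s' d‖ := norm_mul_le _ _
      _ ≤ ‖lam • (1 : B s') + π s' a‖ := by
        grw [NonUnitalStarAlgHom.norm_apply_le, hd, mul_one]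
  · simp only [(π s).map_smul_add_mul, hπd, mul_one]
end

section
/- Let X be a topological space in which the points P₁, P₂, … , together with points Qₙ, Rₙ, Sₙ, Tₙ, Uₙ, Vₙ, Wₙ (n ≥ 1), have closures: cl{Pₙ} = {Pₙ}, cl{Qₙ} = {Qₙ,Pₙ}, cl{Rₙ} = {Rₙ,Pₙ,Sₙ,Tₙ}, cl{Sₙ} = {Sₙ}, cl{Tₙ} = {Tₙ}, cl{Uₙ} = {Uₙ,Tₙ}, cl{Vₙ} = {Vₙ,Tₙ,Wₙ,Pₙ₊₁}, cl{Wₙ} = {Wₙ}, and suppose X is the union of all these points. Then every continuous function f : X → ℝ is constant. -/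
/-!
A continuous map into a T₁ space identifies a point with every point of its closure. The
closure of `Rₙ` ties `Sₙ`, `Tₙ` to `Pₙ`, and the closure of `Vₙ` ties `Tₙ` to `Wₙ` and to
`Pₙ₊₁`, so `f` takes one value on the n-th block and the same value on the next one.
-/

theorem Continuous.apply_eq_of_mem_closure_singleton {X Y : Type*} [TopologicalSpace X]
    [TopologicalSpace Y] [T1Space Y] {f : X → Y} (hf : Continuous f) {x y : X}
    (h : y ∈ closure {x}) : f y = f x :=
  ((specializes_iff_mem_closure.2 h).map hf).eq.symm

theorem stmt17_general {X : Type*} [TopologicalSpace X]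
    (P Q R S T U V W : ℕ → X)
    (hsurj : ∀ x : X, ∃ n : ℕ, x = P n ∨ x = Q n ∨ x = R n ∨ x = S n ∨
      x = T n ∨ x = U n ∨ x = V n ∨ x = W n)
    (hQ : ∀ n, closure {Q n} = {Q n, P n})
    (hR : ∀ n, closure {R n} = {R n, P n, S n, T n})
    (hU : ∀ n, closure {U n} = {U n, T n})
    (hV : ∀ n, closure {V n} = {V n, T n, W n, P (n + 1)})
    (f : X → ℝ) (hf : Continuous f) :
    ∀ x y : X, f x = f y := by
  have closure_eq {a b : X} {s : Set X} (ha : closure {a} = s) (hb : b ∈ s) : f b = f a :=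
    hf.apply_eq_of_mem_closure_singleton (ha ▸ hb)
  have hRP n : f (R n) = f (P n) := (closure_eq (hR n) (by simp)).symm
  have hTP n : f (T n) = f (P n) := (closure_eq (hR n) (by simp)).trans (hRP n)
  have hVP n : f (V n) = f (P n) := (closure_eq (hV n) (by simp)).symm.trans (hTP n)
  have hP_succ n : f (P (n + 1)) = f (P n) := (closure_eq (hV n) (by simp)).trans (hVP n)
  have hP_zero n : f (P n) = f (P 0) := by
    induction n with
    | zero => rfl
    | succ n ih => rw [hP_succ, ih]
  have block x : ∃ n, f x = f (P n) := by
    obtain ⟨n, rfl | rfl | rfl | rfl | rfl | rfl | rfl | rfl⟩ := hsurj x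
    · exact ⟨n, rfl⟩
    · exact ⟨n, (closure_eq (hQ n) (by simp)).symm⟩
    · exact ⟨n, hRP n⟩
    · exact ⟨n, (closure_eq (hR n) (by simp)).trans (hRP n)⟩
    · exact ⟨n, hTP n⟩
    · exact ⟨n, (closure_eq (hU n) (by simp)).symm.trans (hTP n)⟩
    · exact ⟨n, hVP n⟩
    · exact ⟨n, (closure_eq (hV n) (by simp)).trans (hVP n)⟩
  intro x y
  obtain ⟨m, hx⟩ := block x
  obtain ⟨n, hy⟩ := block y
  rw [hx, hy, hP_zero m, hP_zero n]

/-- Let `X` be a topological space whose points are `Pₙ, Qₙ, Rₙ, Sₙ, Tₙ, Uₙ, Vₙ, Wₙ`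
(`n ∈ ℕ`) with closures of singletons as specified.  Then every continuous real-valued
function on `X` is constant. -/
theorem stmt17 {X : Type*} [TopologicalSpace X]
    (P Q R S T U V W : ℕ → X)
    (hsurj : ∀ x : X, ∃ n : ℕ, x = P n ∨ x = Q n ∨ x = R n ∨ x = S n ∨
      x = T n ∨ x = U n ∨ x = V n ∨ x = W n)
    (hP : ∀ n, closure {P n} = {P n})
    (hQ : ∀ n, closure {Q n} = {Q n, P n})
    (hR : ∀ n, closure {R n} = {R n, P n, S n, T n})
    (hS : ∀ n, closure {S n} = {S n})
    (hT : ∀ n, closure {T n} = {T n})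
    (hU : ∀ n, closure {U n} = {U n, T n})
    (hV : ∀ n, closure {V n} = {V n, T n, W n, P (n + 1)})
    (hW : ∀ n, closure {W n} = {W n})
    (f : X → ℝ) (hf : Continuous f) :
    ∀ x y : X, f x = f y :=
  stmt17_general P Q R S T U V W hsurj hQ hR hU hV f hf
end
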